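/- arXiv:1203.3113 — 3 statements merged into one kernel-verified Lean document; each statement's English description precedes it below -/
import Mathlib

section
/- Let S be a nonempty finite set and T a nonempty finite family of functions f_i : S → {0,1} with induced equivalence relations R(f_i). The relation R_S := {(a,b) : more than half of the i ∈ T satisfy f_i(a) = f_i(b)} minimizes the sum ∑_{i ∈ T} d_Δ(R, R(f_i)) over all binary relations R on S, where d_Δ is the symmetric difference metric. -/
theorem stmt6 {S ι : Type*} [Fintype S] [Nonempty S] [DecidableEq ι]
    (T : Finset ι) (hT : T.Nonempty) (f : ι → S → Fin 2) :
    let Rf : ι → Set (S × S) := fun i => {p | f i p.1 = f i p.2}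
    let d : Set (S × S) → Set (S × S) → ℕ := fun A B => (symmDiff A B).ncard
    let RS : Set (S × S) := {p | 2 * (T.filter fun i => f i p.1 = f i p.2).card > T.card}
    ∀ R : Set (S × S), ∑ i ∈ T, d RS (Rf i) ≤ ∑ i ∈ T, d R (Rf i) := by
  intro Rf d RS R
  classical
  have key : ∀ A B : Set (S × S), (symmDiff A B).ncard
      = ∑ p : S × S, (if p ∈ symmDiff A B then 1 else 0) := by
    intro A B
    rw [Set.ncard_eq_toFinset_card', ← Set.filter_mem_univ_eq_toFinset,
      Finset.card_filter]
  have sumval : ∀ (A : Set (S × S)) (p : S × S),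
      ∑ i ∈ T, (if p ∈ symmDiff A (Rf i) then 1 else 0)
        = if p ∈ A then T.card - (T.filter fun i => f i p.1 = f i p.2).card
          else (T.filter fun i => f i p.1 = f i p.2).card := by
    intro A p
    rw [← Finset.card_filter]
    by_cases hA : p ∈ A
    · have h1 : (T.filter fun i => p ∈ symmDiff A (Rf i))
          = T.filter (fun i => ¬ f i p.1 = f i p.2) := by
        apply Finset.filter_congr
        intro i _
        simp [Set.mem_symmDiff, hA, Rf, Set.mem_setOf_eq]
      rw [h1, if_pos hA, Finset.filter_not, Finset.card_sdiff_of_subset (Finset.filter_subset _ _)]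
    · have h1 : (T.filter fun i => p ∈ symmDiff A (Rf i))
          = T.filter (fun i => f i p.1 = f i p.2) := by
        apply Finset.filter_congr
        intro i _
        simp [Set.mem_symmDiff, hA, Rf, Set.mem_setOf_eq]
      rw [h1, if_neg hA]
  calc ∑ i ∈ T, d RS (Rf i)
      = ∑ p : S × S, ∑ i ∈ T, (if p ∈ symmDiff RS (Rf i) then 1 else 0) := by
        simp only [d, key]; rw [Finset.sum_comm]
    _ ≤ ∑ p : S × S, ∑ i ∈ T, (if p ∈ symmDiff R (Rf i) then 1 else 0) := by
        apply Finset.sum_le_sum; intro p _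
        rw [sumval, sumval]
        have hk : (T.filter fun i => f i p.1 = f i p.2).card ≤ T.card :=
          Finset.card_filter_le _ _
        by_cases hRS : p ∈ RS
        · have h2 : T.card < 2 * (T.filter fun i => f i p.1 = f i p.2).card := hRS
          rw [if_pos hRS]
          split <;> omega
        · have h2 : ¬ T.card < 2 * (T.filter fun i => f i p.1 = f i p.2).card := hRS
          rw [if_neg hRS]
          split <;> omega
    _ = ∑ i ∈ T, d R (Rf i) := by
        simp only [d, key]; rw [Finset.sum_comm]
end

section
/- Let S be a nonempty finite set, T a finite family of 0-1 valued functions on S, and let R* be any binary relation on S minimizing ∑_{i∈T} d_Δ(R, R(f_i)) over all relations R. Then for each pair (a,b) ∈ S × S: if strictly more than half the f_i satisfy f_i(a) = f_i(b) then (a,b) ∈ R*, and if strictly fewer than half do then (a,b) ∉ R*. -/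
/-!
Toggling a single pair `p` in a relation changes each distance `d_Δ(R, A)` only at `p`: putting `p`
into `R` costs one for every `A` that does not contain `p`, taking it out costs one for every `A`
that does. Comparing a minimizer with the relation obtained by toggling `p` shows that `p` must
follow the majority of the `A`s.
-/

open Finset

section ToggleOnePoint

open Classical

variable {α ι : Type*} [Finite α]

theorem Set.ncard_symmDiff_insert (R A : Set α) (p : α) :
    (symmDiff (insert p R) A).ncard = (symmDiff R A \ {p}).ncard + if p ∈ A then 0 else 1 := by
  split_ifs with hpA
  · congr 1
    ext q
    by_cases hq : q = p <;> simp [Set.mem_symmDiff, hq, hpA]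
  · rw [← Set.ncard_insert_of_notMem (a := p) (s := symmDiff R A \ {p}) (by simp)]
    congr 1
    ext q
    by_cases hq : q = p <;> simp [Set.mem_symmDiff, hq, hpA]

theorem Set.ncard_symmDiff_diff_singleton (R A : Set α) (p : α) :
    (symmDiff (R \ {p}) A).ncard = (symmDiff R A \ {p}).ncard + if p ∈ A then 1 else 0 := by
  split_ifs with hpA
  · rw [← Set.ncard_insert_of_notMem (a := p) (s := symmDiff R A \ {p}) (by simp)]
    congr 1
    ext q
    by_cases hq : q = p <;> simp [Set.mem_symmDiff, hq, hpA]
  · congr 1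
    ext q
    by_cases hq : q = p <;> simp [Set.mem_symmDiff, hq, hpA]

theorem sum_ncard_symmDiff_insert (T : Finset ι) (A : ι → Set α) (R : Set α) (p : α) :
    ∑ i ∈ T, (symmDiff (insert p R) (A i)).ncard
      = ∑ i ∈ T, (symmDiff R (A i) \ {p}).ncard + #{i ∈ T | p ∉ A i} := by
  simp only [Set.ncard_symmDiff_insert, sum_add_distrib, card_filter, ite_not]

theorem sum_ncard_symmDiff_diff_singleton (T : Finset ι) (A : ι → Set α) (R : Set α) (p : α) :
    ∑ i ∈ T, (symmDiff (R \ {p}) (A i)).ncard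
      = ∑ i ∈ T, (symmDiff R (A i) \ {p}).ncard + #{i ∈ T | p ∈ A i} := by
  simp only [Set.ncard_symmDiff_diff_singleton, sum_add_distrib, card_filter]

def IsMedian (T : Finset ι) (A : ι → Set α) (R : Set α) : Prop :=
  ∀ R', ∑ i ∈ T, (symmDiff R (A i)).ncard ≤ ∑ i ∈ T, (symmDiff R' (A i)).ncard

variable {T : Finset ι} {A : ι → Set α} {R : Set α}

theorem IsMedian.mem (hR : IsMedian T A R) {p : α}
    (hp : #{i ∈ T | p ∉ A i} < #{i ∈ T | p ∈ A i}) : p ∈ R := by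
  by_contra hpR
  have h := hR (insert p R)
  rw [sum_ncard_symmDiff_insert] at h
  conv at h => lhs; rw [← Set.sdiff_singleton_eq_self hpR, sum_ncard_symmDiff_diff_singleton]
  omega

theorem IsMedian.notMem (hR : IsMedian T A R) {p : α}
    (hp : #{i ∈ T | p ∈ A i} < #{i ∈ T | p ∉ A i}) : p ∉ R := by
  intro hpR
  have h := hR (R \ {p})
  rw [sum_ncard_symmDiff_diff_singleton] at h
  conv at h => lhs; rw [← Set.insert_eq_of_mem hpR, sum_ncard_symmDiff_insert]
  omega

end ToggleOnePoint

theorem stmt7_general {S ι : Type*} [Fintype S]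
    (T : Finset ι) (f : ι → S → Fin 2)
    (Rf : ι → Set (S × S)) (hRf : ∀ i, Rf i = {p | f i p.1 = f i p.2})
    (d : Set (S × S) → Set (S × S) → ℕ) (hd : ∀ A B, d A B = (symmDiff A B).ncard)
    (Rstar : Set (S × S))
    (hmin : ∀ R : Set (S × S), ∑ i ∈ T, d Rstar (Rf i) ≤ ∑ i ∈ T, d R (Rf i)) :
    ∀ a b : S,
      (2 * (T.filter fun i => f i a = f i b).card > T.card → (a, b) ∈ Rstar) ∧
      (2 * (T.filter fun i => f i a = f i b).card < T.card → (a, b) ∉ Rstar) := by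
  classical
  intro a b
  have hmed : IsMedian T Rf Rstar := fun R => by simpa only [hd] using hmin R
  have hagree : #{i ∈ T | (a, b) ∈ Rf i} = #{i ∈ T | f i a = f i b} := by
    simp only [hRf, Set.mem_ofPred_eq]
  have htotal := card_filter_add_card_filter_not (s := T) (p := fun i => (a, b) ∈ Rf i)
  exact ⟨fun h => hmed.mem (by omega), fun h => hmed.notMem (by omega)⟩

theorem stmt7 {S ι : Type*} [Fintype S] [Nonempty S] [DecidableEq ι]
    (T : Finset ι) (f : ι → S → Fin 2)
    (Rf : ι → Set (S × S)) (hRf : ∀ i, Rf i = {p | f i p.1 = f i p.2})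
    (d : Set (S × S) → Set (S × S) → ℕ) (hd : ∀ A B, d A B = (symmDiff A B).ncard)
    (Rstar : Set (S × S))
    (hmin : ∀ R : Set (S × S), ∑ i ∈ T, d Rstar (Rf i) ≤ ∑ i ∈ T, d R (Rf i)) :
    ∀ a b : S,
      (2 * (T.filter fun i => f i a = f i b).card > T.card → (a, b) ∈ Rstar) ∧
      (2 * (T.filter fun i => f i a = f i b).card < T.card → (a, b) ∉ Rstar) :=
  stmt7_general T f Rf hRf d hd Rstar hmin
end

section
/- The minimizer of ∑_{i∈T} d_Δ(R, R(f_i)) over binary relations R on a finite set S is unique if and only if no pair (a,b) ∈ S × S has exactly half of the functions f_i ∈ T satisfying f_i(a) = f_i(b). -/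
theorem stmt8 {S ι : Type*} [Fintype S] [Nonempty S] [DecidableEq ι]
    (T : Finset ι) (hT : T.Nonempty) (f : ι → S → Fin 2) :
    let Rf : ι → Set (S × S) := fun i => {p | f i p.1 = f i p.2}
    let d : Set (S × S) → Set (S × S) → ℕ := fun A B => (symmDiff A B).ncard
    (∃! R : Set (S × S), ∀ R' : Set (S × S), ∑ i ∈ T, d R (Rf i) ≤ ∑ i ∈ T, d R' (Rf i)) ↔
      ∀ a b : S, 2 * (T.filter fun i => f i a = f i b).card ≠ T.card := by
  classical
  intro Rf d
  set c : S × S → ℕ := fun p => (T.filter fun i => f i p.1 = f i p.2).card with hc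
  have hcle : ∀ p, c p ≤ T.card := fun p => Finset.card_filter_le _ _
  set w : Set (S × S) → S × S → ℕ :=
    fun R p => if p ∈ R then T.card - c p else c p with hw
  have hwmem : ∀ (R : Set (S × S)) p, p ∈ R → w R p = T.card - c p := by
    intro R p h; simp [hw, h]
  have hwnot : ∀ (R : Set (S × S)) p, p ∉ R → w R p = c p := by
    intro R p h; simp [hw, h]
  have key : ∀ R : Set (S × S), ∑ i ∈ T, d R (Rf i) = ∑ p : S × S, w R p := by
    intro R
    have h1 : ∀ i, d R (Rf i) =
        ∑ p : S × S, (if p ∈ symmDiff R (Rf i) then 1 else 0) := by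
      intro i
      rw [← Finset.card_filter]
      simp only [d, Set.ncard_eq_toFinset_card']
      congr 1
      ext p
      simp [Set.mem_symmDiff, Finset.mem_symmDiff]
    rw [Finset.sum_congr rfl fun i _ => h1 i, Finset.sum_comm]
    apply Finset.sum_congr rfl
    intro p _
    by_cases hp : p ∈ R
    · rw [hwmem R p hp]
      have h2 : ∀ i ∈ T, (if p ∈ symmDiff R (Rf i) then 1 else 0)
          = (if ¬ (f i p.1 = f i p.2) then 1 else 0) := by
        intro i _
        congr 1
        simp only [Set.mem_symmDiff, hp, Rf, Set.mem_setOf_eq, eq_iff_iff]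
        tauto
      rw [Finset.sum_congr rfl h2, ← Finset.card_filter]
      have := Finset.card_filter_add_card_filter_not
        (s := T) (p := fun i => f i p.1 = f i p.2)
      simp only [hc]
      omega
    · rw [hwnot R p hp]
      have h2 : ∀ i ∈ T, (if p ∈ symmDiff R (Rf i) then 1 else 0)
          = (if f i p.1 = f i p.2 then 1 else 0) := by
        intro i _
        congr 1
        simp only [Set.mem_symmDiff, hp, Rf, Set.mem_setOf_eq, eq_iff_iff]
        tauto
      rw [Finset.sum_congr rfl h2, ← Finset.card_filter]
  constructor
  · rintro ⟨R, hRmin, hRuniq⟩ a b h2c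
    set p0 : S × S := (a, b) with hp0
    have hcp0 : 2 * c p0 = T.card := h2c
    set R' : Set (S × S) := symmDiff R {p0} with hR'
    have hsum : ∑ i ∈ T, d R' (Rf i) = ∑ i ∈ T, d R (Rf i) := by
      rw [key, key]
      apply Finset.sum_congr rfl
      intro p _
      by_cases hpp : p = p0
      · subst hpp
        have hcc : T.card - c p0 = c p0 := by omega
        by_cases h1 : p0 ∈ R' <;> by_cases h2 : p0 ∈ R
        · rw [hwmem _ _ h1, hwmem _ _ h2]
        · rw [hwmem _ _ h1, hwnot _ _ h2, hcc]
        · rw [hwnot _ _ h1, hwmem _ _ h2, hcc]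
        · rw [hwnot _ _ h1, hwnot _ _ h2]
      · have hiff : p ∈ R' ↔ p ∈ R := by
          simp [hR', Set.mem_symmDiff, hpp]
        by_cases hp : p ∈ R
        · rw [hwmem _ _ (hiff.mpr hp), hwmem _ _ hp]
        · rw [hwnot _ _ (fun h => hp (hiff.mp h)), hwnot _ _ hp]
    have hR'min : ∀ R'' : Set (S × S), ∑ i ∈ T, d R' (Rf i) ≤ ∑ i ∈ T, d R'' (Rf i) := by
      intro R''
      rw [hsum]; exact hRmin R''
    have hEq := hRuniq R' hR'min
    have hp0mem : p0 ∈ R' ↔ p0 ∉ R := by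
      simp only [hR', Set.mem_symmDiff, Set.mem_singleton_iff]
      tauto
    rw [hEq] at hp0mem
    tauto
  · intro hno
    have hnotie : ∀ p : S × S, 2 * c p ≠ T.card := fun p => hno p.1 p.2
    set R0 : Set (S × S) := {p | T.card < 2 * c p} with hR0
    have hmem0 : ∀ p : S × S, p ∈ R0 ↔ T.card < 2 * c p := fun p => Iff.rfl
    have hpt : ∀ (R : Set (S × S)) (p : S × S), w R0 p ≤ w R p := by
      intro R p
      have h1 := hcle p
      by_cases h0 : p ∈ R0 <;> by_cases hR : p ∈ R
      · rw [hwmem _ _ h0, hwmem _ _ hR]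
      · rw [hwmem _ _ h0, hwnot _ _ hR]
        have := (hmem0 p).mp h0; omega
      · rw [hwnot _ _ h0, hwmem _ _ hR]
        have : ¬ T.card < 2 * c p := fun h => h0 ((hmem0 p).mpr h)
        omega
      · rw [hwnot _ _ h0, hwnot _ _ hR]
    refine ⟨R0, ?_, ?_⟩
    · intro R'
      rw [key, key]
      exact Finset.sum_le_sum fun p _ => hpt R' p
    · intro R hR
      have hle : ∑ i ∈ T, d R0 (Rf i) ≤ ∑ i ∈ T, d R (Rf i) := by
        rw [key, key]
        exact Finset.sum_le_sum fun p _ => hpt R p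
      have heq : ∑ p : S × S, w R0 p = ∑ p : S × S, w R p := by
        rw [← key, ← key]
        exact le_antisymm hle (hR R0)
      have hpteq := (Finset.sum_eq_sum_iff_of_le fun p _ => hpt R p).mp heq
      ext p
      have hp := hpteq p (Finset.mem_univ p)
      have h1 := hcle p
      have h2 := hnotie p
      constructor
      · intro hRp
        by_contra h0
        rw [hwnot _ _ h0, hwmem _ _ hRp] at hp
        have : ¬ T.card < 2 * c p := fun h => h0 ((hmem0 p).mpr h)
        omega
      · intro h0
        by_contra hRp
        rw [hwmem _ _ h0, hwnot _ _ hRp] at hp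
        have := (hmem0 p).mp h0
        omega
end
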